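/- If f, g : ℤ₊ → ℂ are solutions (with f bounded) of the same Marchenko-type equation h(s) − ∑_{p=0}^{∞} h(p) F(p+s−1) = 0 for s ≥ 2, where the kernel F satisfies |F_n| ≤ M_n ∑_{p=⌊n/2⌋}^{∞} η_p with η ∈ ℓ¹₁(ℤ₊) (first moment summable) and M_n bounded, then any bounded solution h belongs to ℓ¹(ℤ₊). -/

import Mathlib

/-!
Only `∑ ‖F n‖ < ∞` matters, and it follows from the kernel bound because
`∑ₙ ∑_{p ≥ n/2} η p ≤ 2 ∑ₚ (p + 1) η p`. Beyond a large index `N` the equation becomes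
`x ≤ b + K x` for `x = ‖h (· + N)‖`, where `b ∈ ℓ¹` collects the finitely many terms with `p < N`
and `K` is a nonnegative Hankel kernel whose row and column sums are at most `1/2`. Thus `K`
halves both the `ℓ¹` and the `ℓ^∞` norms: the Neumann series `u = ∑ Kʲ b` is summable, and the
bounded defect `d = x - u` satisfies `d ≤ K d`, so `sup d ≤ sup d / 2`, i.e. `x ≤ u`.
Working in `ℝ≥0∞` makes every series and every interchange of sums unconditional.
-/

open Filter Finset
open scoped ENNReal

lemma ENNReal.eq_zero_of_le_mul {a c : ℝ≥0∞} (hc : c < 1) (ha : a ≠ ∞) (h : a ≤ c * a) :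
    a = 0 := by
  by_contra h0
  exact (h.trans_lt (ENNReal.mul_lt_mul_left h0 ha hc)).ne (one_mul a).symm

section KernelOperator

variable {ι : Type*} (k : ι → ι → ℝ≥0∞)

noncomputable def kernelOp (φ : ι → ℝ≥0∞) : ι → ℝ≥0∞ := fun s => ∑' q, k s q * φ q

lemma kernelOp_mono {φ ψ : ι → ℝ≥0∞} (h : φ ≤ ψ) : kernelOp k φ ≤ kernelOp k ψ :=
  fun _ => ENNReal.tsum_le_tsum fun q => mul_le_mul_right (h q) _

lemma kernelOp_add (φ ψ : ι → ℝ≥0∞) : kernelOp k (φ + ψ) = kernelOp k φ + kernelOp k ψ := by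
  funext s
  simp only [kernelOp, Pi.add_apply, mul_add, ENNReal.tsum_add]

lemma kernelOp_tsum (φ : ℕ → ι → ℝ≥0∞) :
    kernelOp k (fun s => ∑' j, φ j s) = fun s => ∑' j, kernelOp k (φ j) s := by
  funext s
  simp only [kernelOp, ← ENNReal.tsum_mul_left]
  exact ENNReal.tsum_comm

noncomputable def kernelResolvent (b : ι → ℝ≥0∞) : ι → ℝ≥0∞ :=
  fun s => ∑' j, (kernelOp k)^[j] b s

lemma add_kernelOp_kernelResolvent (b : ι → ℝ≥0∞) :
    b + kernelOp k (kernelResolvent k b) = kernelResolvent k b := by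
  unfold kernelResolvent
  rw [kernelOp_tsum]
  funext s
  rw [Pi.add_apply, eq_comm, tsum_eq_zero_add' ENNReal.summable]
  simp only [Function.iterate_succ_apply', Function.iterate_zero_apply]

variable {k} {c : ℝ≥0∞}

lemma kernelOp_le_mul_iSup (hrow : ∀ s, ∑' q, k s q ≤ c) (φ : ι → ℝ≥0∞) (s : ι) :
    kernelOp k φ s ≤ c * ⨆ q, φ q :=
  calc ∑' q, k s q * φ q ≤ ∑' q, k s q * ⨆ q, φ q :=
        ENNReal.tsum_le_tsum fun q => mul_le_mul_right (le_iSup φ q) _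
    _ = (∑' q, k s q) * ⨆ q, φ q := ENNReal.tsum_mul_right
    _ ≤ c * ⨆ q, φ q := mul_le_mul_left (hrow s) _

lemma tsum_kernelOp_le (hcol : ∀ q, ∑' s, k s q ≤ c) (φ : ι → ℝ≥0∞) :
    ∑' s, kernelOp k φ s ≤ c * ∑' q, φ q :=
  calc ∑' s, ∑' q, k s q * φ q = ∑' q, (∑' s, k s q) * φ q := by
        rw [ENNReal.tsum_comm]
        simp only [ENNReal.tsum_mul_right]
    _ ≤ ∑' q, c * φ q := ENNReal.tsum_le_tsum fun q => mul_le_mul_left (hcol q) _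
    _ = c * ∑' q, φ q := ENNReal.tsum_mul_left

lemma tsum_iterate_kernelOp_le (hcol : ∀ q, ∑' s, k s q ≤ c) (b : ι → ℝ≥0∞) (j : ℕ) :
    ∑' s, (kernelOp k)^[j] b s ≤ c ^ j * ∑' s, b s := by
  induction j with
  | zero => simp
  | succ j ih =>
    rw [Function.iterate_succ_apply', pow_succ', mul_assoc]
    exact (tsum_kernelOp_le hcol _).trans (mul_le_mul_right ih c)

lemma tsum_kernelResolvent_le (hcol : ∀ q, ∑' s, k s q ≤ c) (b : ι → ℝ≥0∞) :
    ∑' s, kernelResolvent k b s ≤ (1 - c)⁻¹ * ∑' s, b s :=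
  calc ∑' s, kernelResolvent k b s = ∑' j, ∑' s, (kernelOp k)^[j] b s := ENNReal.tsum_comm
    _ ≤ ∑' j, c ^ j * ∑' s, b s := ENNReal.tsum_le_tsum (tsum_iterate_kernelOp_le hcol b)
    _ = (1 - c)⁻¹ * ∑' s, b s := by rw [ENNReal.tsum_mul_right, ENNReal.tsum_geometric]

lemma le_kernelResolvent (hc : c < 1) (hrow : ∀ s, ∑' q, k s q ≤ c) {x b : ι → ℝ≥0∞}
    (hx : ⨆ s, x s ≠ ∞) (hxb : x ≤ b + kernelOp k x) : x ≤ kernelResolvent k b := by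
  set u := kernelResolvent k b
  set d := x - u
  have hd : d ≤ kernelOp k d := fun s => by
    show x s - u s ≤ _
    rw [tsub_le_iff_left]
    calc x s ≤ b s + kernelOp k (u + d) s :=
          (hxb s).trans (add_le_add le_rfl (kernelOp_mono k le_add_tsub s))
      _ = u s + kernelOp k d s := by
        rw [kernelOp_add, Pi.add_apply, ← add_assoc]
        exact congrArg (· + _) (congrFun (add_kernelOp_kernelResolvent k b) s)
  have hD : ⨆ s, d s = 0 := ENNReal.eq_zero_of_le_mul hc
    (ne_top_of_le_ne_top hx (iSup_mono fun s => tsub_le_self))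
    (iSup_le fun s => (hd s).trans (kernelOp_le_mul_iSup hrow d s))
  exact fun s => tsub_eq_zero_iff_le.mp (ENNReal.iSup_eq_zero.mp hD s)

theorem tsum_le_of_le_add_kernelOp (hc : c < 1) (hrow : ∀ s, ∑' q, k s q ≤ c)
    (hcol : ∀ q, ∑' s, k s q ≤ c) {x b : ι → ℝ≥0∞} (hx : ⨆ s, x s ≠ ∞)
    (hxb : x ≤ b + kernelOp k x) : ∑' s, x s ≤ (1 - c)⁻¹ * ∑' s, b s :=
  (ENNReal.tsum_le_tsum (le_kernelResolvent hc hrow hx hxb)).trans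
    (tsum_kernelResolvent_le hcol b)

end KernelOperator

lemma Summable.comp_div_two {M : Type*} [AddCommMonoid M] [TopologicalSpace M] [ContinuousAdd M]
    {f : ℕ → M} (hf : Summable f) : Summable fun n => f (n / 2) :=
  Summable.even_add_odd (hf.congr fun k => by simp) (hf.congr fun k => by congr 1; omega)

lemma summable_tsum_nat_add_of_summable_mul {η : ℕ → ℝ} (hη : ∀ n, 0 ≤ η n)
    (h1 : Summable fun n : ℕ => ((n : ℝ) + 1) * η n) : Summable fun n => ∑' p, η (n + p) := by
  have hprod : Summable fun x : ℕ × ℕ => η (x.1 + x.2) := by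
    refine HasAntidiagonal.sigmaAntidiagonalEquivProd.summable_iff.1
      ((summable_sigma_of_nonneg fun _ => hη _).2 ⟨fun _ => .of_finite, h1.congr fun m => ?_⟩)
    rw [tsum_congr fun y => congrArg η (mem_antidiagonal.1 y.2)]
    simp [mul_comm]
  exact ((summable_prod_of_nonneg fun _ => hη _).1 hprod).2

lemma summable_norm_of_norm_le_mul_tsum {E : Type*} [SeminormedAddCommGroup E] {F : ℕ → E}
    {M η : ℕ → ℝ} (hη : ∀ n, 0 ≤ η n) (hη1 : Summable fun n : ℕ => ((n : ℝ) + 1) * η n)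
    (hM : ∃ B, ∀ n, |M n| ≤ B) (hF : ∀ n, ‖F n‖ ≤ M n * ∑' p, η (n / 2 + p)) :
    Summable fun n => ‖F n‖ := by
  obtain ⟨B, hB⟩ := hM
  refine .of_nonneg_of_le (fun n => norm_nonneg _) (fun n => (hF n).trans ?_)
    ((summable_tsum_nat_add_of_summable_mul hη hη1).comp_div_two.mul_left B)
  exact mul_le_mul_of_nonneg_right ((le_abs_self _).trans (hB n)) (tsum_nonneg fun _ => hη _)

theorem summable_norm_of_eq_tsum_mul_add {h K : ℕ → ℂ} (hK : Summable fun n => ‖K n‖)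
    (hb : ∃ B, ∀ n, ‖h n‖ ≤ B) {n₀ : ℕ} (heq : ∀ n, n₀ ≤ n → h n = ∑' p, h p * K (p + n)) :
    Summable fun n => ‖h n‖ := by
  have hKe : ∑' n, ‖K n‖ₑ ≠ ∞ := tsum_enorm_ne_top_iff_summable_norm.2 hK
  obtain ⟨N, hN⟩ : ∃ N, ∀ m ≥ N, ∑' j, ‖K (j + m)‖ₑ ≤ 2⁻¹ := eventually_atTop.1
    ((ENNReal.tendsto_sum_nat_add _ hKe).eventually (eventually_le_nhds (by norm_num)))
  set L := N + n₀
  let k : ℕ → ℕ → ℝ≥0∞ := fun s q => ‖K (q + (s + 2 * L))‖ₑ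
  have hrow : ∀ s, ∑' q, k s q ≤ 2⁻¹ := fun s => hN _ (by omega)
  have hcol : ∀ q, ∑' s, k s q ≤ 2⁻¹ := fun q => by
    simpa [k, add_comm, add_left_comm] using hN (q + 2 * L) (by omega)
  let x : ℕ → ℝ≥0∞ := fun s => ‖h (s + L)‖ₑ
  let b : ℕ → ℝ≥0∞ := fun s => ∑ p ∈ range L, ‖h p‖ₑ * ‖K (p + (s + L))‖ₑ
  have hx : ⨆ s, x s ≠ ∞ := by
    obtain ⟨B, hB⟩ := hb
    refine ne_top_of_le_ne_top (ENNReal.ofReal_ne_top (r := B)) (iSup_le fun s => ?_)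
    show ‖h (s + L)‖ₑ ≤ _
    rw [← ofReal_norm]
    exact ENNReal.ofReal_le_ofReal (hB _)
  have hb : ∑' s, b s ≠ ∞ := by
    rw [Summable.tsum_finsetSum fun _ _ => ENNReal.summable]
    refine ENNReal.sum_ne_top.2 fun p _ => ?_
    rw [ENNReal.tsum_mul_left]
    refine ENNReal.mul_ne_top enorm_ne_top (ne_top_of_le_ne_top hKe ?_)
    exact ENNReal.tsum_comp_le_tsum_of_injective (fun a b hab => by omega) _
  have hxb : x ≤ b + kernelOp k x := fun s =>
    calc x s = ‖∑' p, h p * K (p + (s + L))‖ₑ := by rw [← heq _ (by omega)]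
      _ ≤ ∑' p, ‖h p * K (p + (s + L))‖ₑ := enorm_tsum_le_tsum_enorm
      _ = b s + ∑' q, ‖h (q + L) * K (q + L + (s + L))‖ₑ := by
        simp only [b, enorm_mul]
        exact (ENNReal.summable.sum_add_tsum_nat_add').symm
      _ = b s + kernelOp k x s := by
        congr 1
        refine tsum_congr fun q => ?_
        rw [enorm_mul, mul_comm, show q + L + (s + L) = q + (s + 2 * L) by omega]
  have hsum := tsum_le_of_le_add_kernelOp (by norm_num) hrow hcol hx hxb
  exact (summable_nat_add_iff L).1 (tsum_enorm_ne_top_iff_summable_norm.1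
    (ne_top_of_le_ne_top (ENNReal.mul_ne_top (by norm_num) hb) hsum))

/-- Marchenko bootstrap: a bounded solution of the homogeneous GLM-type equation
with a kernel having summable first moment bound is absolutely summable. -/
theorem marchenko_bootstrap (h F : ℕ → ℂ) (M η : ℕ → ℝ)
    (hb : ∃ B, ∀ n, ‖h n‖ ≤ B)
    (heq : ∀ s : ℕ, 2 ≤ s → h s = ∑' p : ℕ, h p * F (p + s - 1))
    (hη : ∀ n, 0 ≤ η n) (hη1 : Summable (fun n : ℕ => (1 + n : ℝ) * η n))
    (hM : ∃ B, ∀ n, |M n| ≤ B)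
    (hFb : ∀ n : ℕ, ‖F n‖ ≤ M n * ∑' p : ℕ, η (n / 2 + p)) :
    Summable (fun n => ‖h n‖) := by
  have hF := summable_norm_of_norm_le_mul_tsum hη (by simpa [add_comm] using hη1) hM hFb
  -- `p + s - 1` is `(p + s) - 1`, so `heq` is literally the equation for `K m = F (m - 1)`.
  exact summable_norm_of_eq_tsum_mul_add (K := fun m => F (m - 1))
    ((summable_nat_add_iff 1).1 (by simpa using hF)) hb heq
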